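/- arXiv:1906.12018 — 7 statements merged into one kernel-verified Lean document; each statement's English description precedes it below -/
import Mathlib

section
/- Let G be a connected graph on a finite vertex set V with an injective rank function π : V → ℕ. For each vertex v, define the canonical hub label L(v) = { u ∈ P_{uv} : π(u) ≤ π(w) for all w ∈ P_{uv} }, i.e., u is the unique minimum-rank (highest-order) vertex on shortest u-v paths. Then for every pair of vertices u, v there exists a common hub h ∈ L(u) ∩ L(v) with d(u,h) + d(h,v) = d(u,v). Consequently, min over h ∈ L(u) ∩ L(v) of d(u,h)+d(h,v) equals d(u,v). -/
/-- `canonLabel G π u v` means `u ∈ L(v)` in the canonical hierarchical hub labeling: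
`u` has minimum `π` among all vertices on shortest `u`-`v` paths
(`P_{uv} = { w | d(u,w) + d(w,v) = d(u,v) }`; note `u ∈ P_{uv}` always). -/
def canonLabel {V : Type*} (G : SimpleGraph V) (π : V → ℕ) (u v : V) : Prop :=
  ∀ w, G.dist u w + G.dist w v = G.dist u v → π u ≤ π w

theorem canonical_labeling_two_hop_cover {V : Type*} [Fintype V] (G : SimpleGraph V)
    (hG : G.Connected) (π : V → ℕ) (hπ : Function.Injective π) (u v : V) :
    (∃ h, canonLabel G π h u ∧ canonLabel G π h v ∧
      G.dist u h + G.dist h v = G.dist u v) ∧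
    (∀ h, canonLabel G π h u → canonLabel G π h v →
      G.dist u v ≤ G.dist u h + G.dist h v) := by
  classical
  constructor
  · -- choose h of minimal π on P_{uv}
    have hne : u ∈ Finset.univ.filter (fun w => G.dist u w + G.dist w v = G.dist u v) := by
      simp [G.dist_self]
    obtain ⟨h, hmem, hmin⟩ :=
      (Finset.univ.filter (fun w => G.dist u w + G.dist w v = G.dist u v)).exists_min_image π
        ⟨u, hne⟩
    simp only [Finset.mem_filter, Finset.mem_univ, true_and] at hmem
    have hmin' : ∀ w, G.dist u w + G.dist w v = G.dist u v → π h ≤ π w := by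
      intro w hw
      exact hmin w (by simp [hw])
    refine ⟨h, ?_, ?_, hmem⟩
    · intro w hw
      apply hmin'
      have c1 : G.dist u w = G.dist w u := SimpleGraph.dist_comm ..
      have c2 : G.dist w h = G.dist h w := SimpleGraph.dist_comm ..
      have c3 : G.dist u h = G.dist h u := SimpleGraph.dist_comm ..
      have t1 : G.dist w v ≤ G.dist w h + G.dist h v := hG.dist_triangle
      have h1 : G.dist u w + G.dist w v ≤ G.dist u v := by omega
      have h2 : G.dist u v ≤ G.dist u w + G.dist w v := hG.dist_triangle
      omega
    · intro w hw
      apply hmin'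
      have h1 : G.dist u w + G.dist w v ≤ G.dist u v := by
        calc G.dist u w + G.dist w v ≤ (G.dist u h + G.dist h w) + G.dist w v := by
              have := hG.dist_triangle (u := u) (v := h) (w := w)
              omega
          _ = G.dist u h + (G.dist h w + G.dist w v) := by ring
          _ = G.dist u h + G.dist h v := by rw [hw]
          _ = G.dist u v := hmem
      have h2 : G.dist u v ≤ G.dist u w + G.dist w v := hG.dist_triangle
      omega
  · intro h _ _
    exact hG.dist_triangle
end

section
/- Let G be a finite connected graph with injective rank π, and let u, v be distinct vertices. Then u is the minimum-π vertex of P_{uv} (i.e., u ∈ L(v) in the canonical labeling) if and only if for every vertex h with π(h) < π(u) we have d(u,v) < d(u,h) + d(h,v). Equivalently, the PLL distance-check criterion characterizes canonical labels. -/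
theorem canonical_label_iff_distance_check {V : Type*} [Fintype V] (G : SimpleGraph V)
    (hG : G.Connected) (π : V → ℕ) (hπ : Function.Injective π) (u v : V) (huv : u ≠ v) :
    canonLabel G π u v ↔
      ∀ h : V, π h < π u → G.dist u v < G.dist u h + G.dist h v := by
  constructor
  · intro hc h hh
    have htri : G.dist u v ≤ G.dist u h + G.dist h v := hG.dist_triangle
    rcases lt_or_eq_of_le htri with h1 | h1
    · exact h1
    · exact absurd (hc h h1.symm) (not_le.mpr hh)
  · intro hd w hw
    by_contra hlt
    exact absurd hw (Nat.ne_of_gt (hd w (not_le.mp hlt)))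
end

section
/- Let G be a finite connected graph with injective rank π and canonical hub labeling L. Suppose w is the minimum-π vertex of P_{uv} and w ≠ u, w ≠ v. Then w ∈ L(u) and w ∈ L(v), and moreover d(w,u) ≤ d(u,v) and d(w,v) ≤ d(u,v) (the pruning hub reaches both endpoints within d(u,v) steps). -/
theorem pruning_hub_reaches_both_endpoints {V : Type*} [Fintype V] (G : SimpleGraph V)
    (hG : G.Connected) (π : V → ℕ) (hπ : Function.Injective π) (u v w : V)
    (hwP : G.dist u w + G.dist w v = G.dist u v)
    (hwmin : ∀ x, G.dist u x + G.dist x v = G.dist u v → π w ≤ π x)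
    (hwu : w ≠ u) (hwv : w ≠ v) :
    canonLabel G π w u ∧ canonLabel G π w v ∧
      G.dist w u ≤ G.dist u v ∧ G.dist w v ≤ G.dist u v := by
  refine ⟨?_, ?_, ?_, ?_⟩
  · intro x hx
    apply hwmin
    have h1 : G.dist u x + G.dist x v ≤ G.dist u v := by
      have t : G.dist x v ≤ G.dist x w + G.dist w v := hG.dist_triangle
      have c1 := SimpleGraph.dist_comm (G:=G) (u:=w) (v:=x)
      have c2 := SimpleGraph.dist_comm (G:=G) (u:=x) (v:=u)
      have c3 := SimpleGraph.dist_comm (G:=G) (u:=u) (v:=w)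
      omega
    have h2 : G.dist u v ≤ G.dist u x + G.dist x v := hG.dist_triangle
    omega
  · intro x hx
    apply hwmin
    have h1 : G.dist u x + G.dist x v ≤ G.dist u v := by
      have t : G.dist u x ≤ G.dist u w + G.dist w x := hG.dist_triangle
      omega
    have h2 : G.dist u v ≤ G.dist u x + G.dist x v := hG.dist_triangle
    omega
  · have c := SimpleGraph.dist_comm (G:=G) (u:=w) (v:=u); omega
  · omega
end

section
/- Let G be a finite connected graph with injective rank π, and suppose L' is any hub labeling that is hierarchical with respect to π (u ∈ L'(v) implies π(u) ≤ π(v)) and covers all pairs: for all u,v there exists h ∈ L'(u) ∩ L'(v) with d(u,h)+d(h,v) = d(u,v). Then the canonical labeling is contained in L': for all u,v, if u is the minimum-π vertex of P_{uv} then u ∈ L'(v). Hence the canonical hierarchical hub labeling is the minimum hierarchical hub labeling for the order π. -/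
theorem canonical_labeling_minimal {V : Type*} [Fintype V] (G : SimpleGraph V)
    (hG : G.Connected) (π : V → ℕ) (hπ : Function.Injective π)
    (L' : V → Set V)
    (hier : ∀ u v : V, u ∈ L' v → π u ≤ π v)
    (cover : ∀ u v : V, ∃ h, h ∈ L' u ∧ h ∈ L' v ∧
      G.dist u h + G.dist h v = G.dist u v) :
    ∀ u v : V, canonLabel G π u v → u ∈ L' v := by
  intro u v hcanon
  obtain ⟨h, hu, hv, hd⟩ := cover u v
  have h1 : π u ≤ π h := hcanon h hd
  have h2 : π h ≤ π u := hier h u hu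
  have : h = u := hπ (le_antisymm h2 h1)
  rwa [this] at hv
end

section
/- Let G be a finite connected graph with injective rank π and canonical hub labeling L. For any two vertices u and v, every common hub h ∈ L(u) ∩ L(v) satisfies d(u,h) + d(h,v) ≥ d(u,v), with equality attained by at least one common hub. Hence the 2-hop query formula min_{h ∈ L(u) ∩ L(v)} (d(u,h)+d(h,v)) returns exactly d(u,v). -/
theorem two_hop_query_exact {V : Type*} [Fintype V] (G : SimpleGraph V)
    (hG : G.Connected) (π : V → ℕ) (hπ : Function.Injective π) (u v : V) :
    (∀ h, canonLabel G π h u → canonLabel G π h v →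
      G.dist u v ≤ G.dist u h + G.dist h v) ∧
    (∃ h, canonLabel G π h u ∧ canonLabel G π h v ∧
      G.dist u h + G.dist h v = G.dist u v) := by
  constructor
  · intro h _ _
    calc G.dist u v ≤ G.dist u h + G.dist h v := hG.dist_triangle
      _ = G.dist u h + G.dist h v := rfl
  · classical
    have hne : (Finset.univ.filter
        (fun w => G.dist u w + G.dist w v = G.dist u v)).Nonempty := by
      refine ⟨u, ?_⟩
      simp [SimpleGraph.dist_self]
    obtain ⟨h, hmem, hmin⟩ := Finset.exists_min_image _ π hne
    simp only [Finset.mem_filter, Finset.mem_univ, true_and] at hmem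
    have hmin' : ∀ w, G.dist u w + G.dist w v = G.dist u v → π h ≤ π w := by
      intro w hw
      exact hmin w (by simp [hw])
    refine ⟨h, ?_, ?_, hmem⟩
    · intro w hw
      apply hmin'
      have h1 : G.dist u w + G.dist w h = G.dist u h := by
        rw [SimpleGraph.dist_comm (G := G) (u := u) (v := w),
          SimpleGraph.dist_comm (G := G) (u := w) (v := h),
          SimpleGraph.dist_comm (G := G) (u := u) (v := h), Nat.add_comm]; exact hw
      have h2 : G.dist u w + G.dist w v ≤ G.dist u v := by
        calc G.dist u w + G.dist w v ≤ G.dist u w + (G.dist w h + G.dist h v) := by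
              have := hG.dist_triangle (u := w) (v := h) (w := v); omega
          _ = G.dist u h + G.dist h v := by omega
          _ = G.dist u v := hmem
      have h3 := hG.dist_triangle (u := u) (v := w) (w := v)
      omega
    · intro w hw
      apply hmin'
      have h2 : G.dist u w + G.dist w v ≤ G.dist u v := by
        calc G.dist u w + G.dist w v ≤ (G.dist u h + G.dist h w) + G.dist w v := by
              have := hG.dist_triangle (u := u) (v := h) (w := w); omega
          _ = G.dist u h + G.dist h v := by omega
          _ = G.dist u v := hmem
      have h3 := hG.dist_triangle (u := u) (v := w) (w := v)
      omega
end

section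
/- Let G be a finite connected graph with injective rank π and canonical hub labeling L. If u ∈ L(v) and w ∈ P_{uv} with w ≠ u, then u ∈ L(w); that is, a canonical hub of v is also a canonical hub of every intermediate vertex on a shortest path from itself to v. -/
theorem canonical_hub_of_intermediate {V : Type*} [Fintype V] (G : SimpleGraph V)
    (hG : G.Connected) (π : V → ℕ) (hπ : Function.Injective π) (u v w : V)
    (hu : canonLabel G π u v) (hw : G.dist u w + G.dist w v = G.dist u v)
    (hwu : w ≠ u) :
    canonLabel G π u w := by
  intro x hx
  apply hu
  have t1 : G.dist u v ≤ G.dist u x + G.dist x v := hG.dist_triangle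
  have t2 : G.dist x v ≤ G.dist x w + G.dist w v := hG.dist_triangle
  omega
end

section
/- Let G be a finite connected graph with injective rank π and let u ≠ v with π(u) < π(v). Then exactly one of the following holds: (a) u ∈ L(v) (u is minimum-π in P_{uv}), or (b) there exists a vertex h with π(h) < π(u), h ∈ L(u), h ∈ L(v), and d(u,h) + d(h,v) = d(u,v). That is, any pruned pair has a pruning witness that is already a common canonical hub of both endpoints. -/
theorem pruned_pair_has_common_hub_witness {V : Type*} [Fintype V] (G : SimpleGraph V)
    (hG : G.Connected) (π : V → ℕ) (hπ : Function.Injective π) (u v : V)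
    (huv : u ≠ v) (hrank : π u < π v) :
    Xor' (canonLabel G π u v)
      (∃ h, π h < π u ∧ canonLabel G π h u ∧ canonLabel G π h v ∧
        G.dist u h + G.dist h v = G.dist u v) := by
  classical
  by_cases hc : canonLabel G π u v
  · refine Or.inl ⟨hc, ?_⟩
    rintro ⟨h, hlt, -, -, hd⟩
    exact absurd (hc h hd) (not_le.mpr hlt)
  · refine Or.inr ⟨?_, hc⟩
    simp only [canonLabel, not_forall, not_le] at hc
    obtain ⟨w0, hw0, hw0lt⟩ := hc
    set S : Finset V := Finset.univ.filter
      (fun w => G.dist u w + G.dist w v = G.dist u v) with hS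
    have hw0S : w0 ∈ S := by simp [hS, hw0]
    obtain ⟨h, hhS, hmin⟩ := S.exists_min_image π ⟨w0, hw0S⟩
    have hhP : G.dist u h + G.dist h v = G.dist u v := by
      simpa [hS] using hhS
    have hhu : π h < π u := lt_of_le_of_lt (hmin w0 hw0S) hw0lt
    have key : ∀ w, G.dist u w + G.dist w h = G.dist u h →
        G.dist u w + G.dist w v = G.dist u v := by
      intro w hw
      have h1 : G.dist u v ≤ G.dist u w + G.dist w v := hG.dist_triangle
      have h2 : G.dist w v ≤ G.dist w h + G.dist h v := hG.dist_triangle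
      omega
    refine ⟨h, hhu, ?_, ?_, hhP⟩
    · intro w hw
      have hw' : G.dist u w + G.dist w h = G.dist u h := by
        rw [SimpleGraph.dist_comm (u := h) (v := w), SimpleGraph.dist_comm (u := w) (v := u),
          SimpleGraph.dist_comm (u := h) (v := u)] at hw
        omega
      exact hmin w (by simp [hS, key w hw'])
    · intro w hw
      have hw2 : G.dist u w + G.dist w v = G.dist u v := by
        have h1 : G.dist u v ≤ G.dist u w + G.dist w v := hG.dist_triangle
        have h2 : G.dist u w ≤ G.dist u h + G.dist h w := hG.dist_triangle
        omega
      exact hmin w (by simp [hS, hw2])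
end
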